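/- Suppose the probability measure P is atomless. Then for every probability measure Q ~ P, the set 𝒳 := {X ∈ L⁰₊ : E_P[X] = 1} is not uniformly Q-integrable; equivalently, there exists an 𝒳-valued sequence (Xₙ) with limₙ→∞ Xₙ = 0 in measure but lim infₙ→∞ E_Q[Xₙ] > 0. -/

import Mathlib

open MeasureTheory Filter Topology

/-- `L⁰₊`: (representatives of) measurable functions that are nonnegative `P`-a.s. -/
def L0pos {Ω : Type*} [MeasurableSpace Ω] (P : Measure Ω) : Set (Ω → ℝ) :=
  {X | Measurable X ∧ ∀ᵐ ω ∂P, 0 ≤ X ω}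

/-- `𝒳` is uniformly `Q`-integrable:  `sup_{X ∈ 𝒳} E_Q[X 1_{X > n}] → 0`. -/
def UnifInt {Ω : Type*} [MeasurableSpace Ω] (Q : Measure Ω) (𝒳 : Set (Ω → ℝ)) : Prop :=
  Tendsto (fun n : ℕ => ⨆ X ∈ 𝒳, ∫⁻ ω in {ω | (n : ℝ) < X ω}, ENNReal.ofReal (X ω) ∂Q)
    atTop (𝓝 0)

open scoped ENNReal

/-!
Since `Q ≪ P` and `Q ≠ 0`, the two measures are not mutually singular, so a Hahn decomposition
of `Q - c • P` gives `c > 0` and a set `B` of positive `P`-measure on which `Q ≥ c • P`.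
Atomlessness lets us halve subsets of `B` repeatedly, which gives sets `Cₙ ⊆ B` with
`0 < P Cₙ < 1 / n`. The normalized indicators `Xₙ = 1_{Cₙ} / P Cₙ` have
`E_P[Xₙ] = 1`, converge to `0` in measure, exceed `n` on their support, and satisfy
`E_Q[Xₙ] = Q Cₙ / P Cₙ ≥ c`.
-/

theorem ENNReal.natCast_lt_toReal_inv_of_lt_inv {a : ℝ≥0∞} (ha : a ≠ 0) {n : ℕ}
    (h : a < (n : ℝ≥0∞)⁻¹) : (n : ℝ) < a.toReal⁻¹ := by
  rw [← ENNReal.toReal_inv, ← ENNReal.toReal_natCast]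
  exact (ENNReal.toReal_lt_toReal (ENNReal.natCast_ne_top n) (ENNReal.inv_ne_top.mpr ha)).mpr
    (ENNReal.lt_inv_iff_lt_inv.mp h)

namespace MeasureTheory

variable {Ω : Type*} [MeasurableSpace Ω]

theorem exists_const_mul_le_of_absolutelyContinuous {μ ν : Measure Ω} [IsFiniteMeasure μ]
    [IsFiniteMeasure ν] (hμν : μ ≪ ν) (hμ : μ ≠ 0) :
    ∃ c : ℝ≥0∞, 0 < c ∧ ∃ B, MeasurableSet B ∧ 0 < ν B ∧
      ∀ C ⊆ B, MeasurableSet C → c * ν C ≤ μ C := by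
  have hsing : ¬ μ ⟂ₘ ν := fun h =>
    hμ (Measure.eq_zero_of_absolutelyContinuous_of_mutuallySingular hμν h)
  obtain ⟨c, hc, B, hB, hνB, hle⟩ := Measure.exists_positive_of_not_mutuallySingular μ ν hsing
  refine ⟨c, ENNReal.coe_pos.mpr hc, B, hB, hνB, fun C hCB hC => ?_⟩
  simpa only [Set.inter_eq_left.mpr hCB] using hle C hC

section Atomless

variable {μ : Measure Ω} [IsFiniteMeasure μ]
  (hatomless : ∀ B : Set Ω, MeasurableSet B → 0 < μ B →
    ∃ C : Set Ω, MeasurableSet C ∧ C ⊆ B ∧ 0 < μ C ∧ μ C < μ B)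
include hatomless

theorem exists_subset_measure_pos_le_half {B : Set Ω} (hB : MeasurableSet B) (hμB : 0 < μ B) :
    ∃ C ⊆ B, MeasurableSet C ∧ 0 < μ C ∧ μ C ≤ μ B / 2 := by
  obtain ⟨D, hD, hDB, hμD, hDlt⟩ := hatomless B hB hμB
  by_cases hhalf : μ D ≤ μ B / 2
  · exact ⟨D, hDB, hD, hμD, hhalf⟩
  -- otherwise the complement of `D` in `B` is the smaller half
  have hdiff : μ (B \ D) = μ B - μ D := measure_sdiff hDB hD.nullMeasurableSet (measure_ne_top μ D)
  refine ⟨B \ D, Set.sdiff_subset, hB.diff hD, ?_, ?_⟩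
  · rw [hdiff]
    exact tsub_pos_iff_lt.mpr hDlt
  · rw [hdiff, tsub_le_iff_right]
    calc μ B = μ B / 2 + μ B / 2 := (ENNReal.add_halves _).symm
      _ ≤ μ B / 2 + μ D := add_le_add_right (le_of_not_ge hhalf) _

theorem exists_subset_measure_pos_le_inv_two_pow {B : Set Ω} (hB : MeasurableSet B)
    (hμB : 0 < μ B) (n : ℕ) :
    ∃ C ⊆ B, MeasurableSet C ∧ 0 < μ C ∧ μ C ≤ μ B * 2⁻¹ ^ n := by
  induction n with
  | zero => exact ⟨B, subset_rfl, hB, hμB, by simp⟩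
  | succ n ih =>
    obtain ⟨C, hCB, hC, hμC, hCle⟩ := ih
    obtain ⟨D, hDC, hD, hμD, hDle⟩ := exists_subset_measure_pos_le_half hatomless hC hμC
    refine ⟨D, hDC.trans hCB, hD, hμD, ?_⟩
    calc μ D ≤ μ C / 2 := hDle
      _ ≤ μ B * 2⁻¹ ^ n / 2 := ENNReal.div_le_div_right hCle 2
      _ = μ B * 2⁻¹ ^ (n + 1) := by rw [pow_succ, div_eq_mul_inv, mul_assoc]

theorem exists_subset_measure_pos_lt {B : Set Ω} (hB : MeasurableSet B) (hμB : 0 < μ B)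
    {ε : ℝ≥0∞} (hε : 0 < ε) :
    ∃ C ⊆ B, MeasurableSet C ∧ 0 < μ C ∧ μ C < ε := by
  have hlim : Tendsto (fun n : ℕ => μ B * 2⁻¹ ^ n) atTop (𝓝 0) := by
    simpa using ENNReal.Tendsto.const_mul
      (ENNReal.tendsto_pow_atTop_nhds_zero_of_lt_one (by norm_num : (2⁻¹ : ℝ≥0∞) < 1))
      (Or.inr (measure_ne_top μ B))
  obtain ⟨n, hn⟩ := (hlim.eventually_lt_const hε).exists
  obtain ⟨C, hCB, hC, hμC, hCle⟩ := exists_subset_measure_pos_le_inv_two_pow hatomless hB hμB n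
  exact ⟨C, hCB, hC, hμC, hCle.trans_lt hn⟩

end Atomless

theorem tendstoInMeasure_zero_of_support_subset {ι E : Type*} [PseudoEMetricSpace E] [Zero E]
    {μ : Measure Ω} {l : Filter ι} {f : ι → Ω → E} {C : ι → Set Ω}
    (hfC : ∀ i, Function.support (f i) ⊆ C i) (hC : Tendsto (fun i => μ (C i)) l (𝓝 0)) :
    TendstoInMeasure μ f l (fun _ => 0) := by
  intro ε hε
  refine tendsto_of_tendsto_of_tendsto_of_le_of_le tendsto_const_nhds hC (fun _ => zero_le)
    (fun i => measure_mono fun ω hω => hfC i fun hzero => ?_)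
  simp only [Set.mem_ofPred_eq, hzero, edist_self] at hω
  exact hω.not_gt hε

/-- The probability density `1_C / μ C` of the conditional law `μ(· | C)`. -/
noncomputable def normalizedIndicator (μ : Measure Ω) (C : Set Ω) : Ω → ℝ :=
  C.indicator fun _ => (μ C).toReal⁻¹

section NormalizedIndicator

variable {μ : Measure Ω} {C : Set Ω}

theorem normalizedIndicator_mem_L0pos (hC : MeasurableSet C) (ν : Measure Ω) :
    normalizedIndicator μ C ∈ L0pos ν :=
  ⟨measurable_const.indicator hC,
    ae_of_all _ fun _ => Set.indicator_apply_nonneg fun _ => by positivity⟩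

theorem support_normalizedIndicator_subset : Function.support (normalizedIndicator μ C) ⊆ C :=
  Set.support_indicator_subset

theorem ofReal_normalizedIndicator [IsFiniteMeasure μ] (hμC : μ C ≠ 0) :
    (fun ω => ENNReal.ofReal (normalizedIndicator μ C ω)) = C.indicator fun _ => (μ C)⁻¹ := by
  funext ω
  by_cases hω : ω ∈ C
  · simp only [normalizedIndicator, Set.indicator_of_mem hω]
    rw [ENNReal.ofReal_inv_of_pos (ENNReal.toReal_pos hμC (measure_ne_top μ C)),
      ENNReal.ofReal_toReal (measure_ne_top μ C)]
  · simp [normalizedIndicator, Set.indicator_of_notMem hω]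

theorem lintegral_normalizedIndicator [IsFiniteMeasure μ] (hC : MeasurableSet C) (hμC : μ C ≠ 0)
    (ν : Measure Ω) :
    ∫⁻ ω, ENNReal.ofReal (normalizedIndicator μ C ω) ∂ν = ν C / μ C := by
  rw [ofReal_normalizedIndicator hμC, lintegral_indicator_const hC, ENNReal.div_eq_inv_mul]

theorem lintegral_normalizedIndicator_self [IsFiniteMeasure μ] (hC : MeasurableSet C)
    (hμC : μ C ≠ 0) : ∫⁻ ω, ENNReal.ofReal (normalizedIndicator μ C ω) ∂μ = 1 := by
  rw [lintegral_normalizedIndicator hC hμC, ENNReal.div_self hμC (measure_ne_top μ C)]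

theorem setLIntegral_normalizedIndicator_of_lt [IsFiniteMeasure μ] (hC : MeasurableSet C)
    (hμC : μ C ≠ 0) (ν : Measure Ω) {t : ℝ} (ht : t < (μ C).toReal⁻¹) :
    ∫⁻ ω in {ω | t < normalizedIndicator μ C ω}, ENNReal.ofReal (normalizedIndicator μ C ω) ∂ν
      = ν C / μ C := by
  have hCsub : C ⊆ {ω | t < normalizedIndicator μ C ω} := fun ω hω => by
    simpa only [Set.mem_ofPred_eq, normalizedIndicator, Set.indicator_of_mem hω] using ht
  rw [ofReal_normalizedIndicator hμC, setLIntegral_indicator hC, Set.inter_eq_left.mpr hCsub,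
    setLIntegral_const, ENNReal.div_eq_inv_mul]

end NormalizedIndicator

end MeasureTheory

theorem stmt_17_general {Ω : Type*} [MeasurableSpace Ω] (P : Measure Ω) [IsProbabilityMeasure P]
    (hatomless : ∀ B : Set Ω, MeasurableSet B → 0 < P B →
      ∃ C : Set Ω, MeasurableSet C ∧ C ⊆ B ∧ 0 < P C ∧ P C < P B)
    (Q : Measure Ω) (hQ : IsProbabilityMeasure Q) (hQP : Q ≪ P) :
    ¬ UnifInt Q {X | X ∈ L0pos P ∧ ∫⁻ ω, ENNReal.ofReal (X ω) ∂P = 1} ∧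
    ∃ X : ℕ → Ω → ℝ,
      (∀ n, X n ∈ L0pos P ∧ ∫⁻ ω, ENNReal.ofReal (X n ω) ∂P = 1) ∧
      TendstoInMeasure P X atTop (fun _ => (0 : ℝ)) ∧
      0 < Filter.liminf (fun n => ∫⁻ ω, ENNReal.ofReal (X n ω) ∂Q) atTop := by
  obtain ⟨c, hc, B, hB, hPB, hcB⟩ :=
    exists_const_mul_le_of_absolutelyContinuous hQP (IsProbabilityMeasure.ne_zero Q)
  choose C hCB hC hPC hPCn using fun n : ℕ =>
    exists_subset_measure_pos_lt hatomless hB hPB (ε := (n : ℝ≥0∞)⁻¹) (by simp)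
  let X n := normalizedIndicator P (C n)
  have hmem : ∀ n, X n ∈ L0pos P ∧ ∫⁻ ω, ENNReal.ofReal (X n ω) ∂P = 1 := fun n =>
    ⟨normalizedIndicator_mem_L0pos (hC n) P, lintegral_normalizedIndicator_self (hC n) (hPC n).ne'⟩
  have hQC : ∀ n, c ≤ Q (C n) / P (C n) := fun n =>
    (ENNReal.le_div_iff_mul_le (Or.inl (hPC n).ne') (Or.inl (measure_ne_top P _))).mpr
      (hcB _ (hCB n) (hC n))
  have hsup : ∀ n : ℕ, c ≤ ⨆ Y ∈ {X | X ∈ L0pos P ∧ ∫⁻ ω, ENNReal.ofReal (X ω) ∂P = 1},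
      ∫⁻ ω in {ω | (n : ℝ) < Y ω}, ENNReal.ofReal (Y ω) ∂Q := fun n => by
    refine le_trans ?_ (le_biSup _ (hmem n))
    rw [setLIntegral_normalizedIndicator_of_lt (hC n) (hPC n).ne' Q
      (ENNReal.natCast_lt_toReal_inv_of_lt_inv (hPC n).ne' (hPCn n))]
    exact hQC n
  have hPC0 : Tendsto (fun n => P (C n)) atTop (𝓝 0) :=
    tendsto_of_tendsto_of_tendsto_of_le_of_le tendsto_const_nhds ENNReal.tendsto_inv_nat_nhds_zero
      (fun _ => zero_le) (fun n => (hPCn n).le)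
  refine ⟨fun hUI => hc.not_ge (ge_of_tendsto' hUI hsup), X, hmem,
    tendstoInMeasure_zero_of_support_subset (fun _ => support_normalizedIndicator_subset) hPC0, ?_⟩
  refine hc.trans_le (le_liminf_of_le (by isBoundedDefault) (Eventually.of_forall fun n => ?_))
  rw [lintegral_normalizedIndicator (hC n) (hPC n).ne' Q]
  exact hQC n

/-- If `P` is atomless, then for every probability `Q ~ P` the set
`{X ∈ L⁰₊ : E_P[X] = 1}` is not uniformly `Q`-integrable; equivalently, it contains a
sequence converging to `0` in measure whose `Q`-expectations stay bounded away from `0`. -/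
theorem stmt_17 {Ω : Type*} [MeasurableSpace Ω] (P : Measure Ω) [IsProbabilityMeasure P]
    (hatomless : ∀ B : Set Ω, MeasurableSet B → 0 < P B →
      ∃ C : Set Ω, MeasurableSet C ∧ C ⊆ B ∧ 0 < P C ∧ P C < P B)
    (Q : Measure Ω) (hQ : IsProbabilityMeasure Q) (hQP : Q ≪ P) (hPQ : P ≪ Q) :
    ¬ UnifInt Q {X | X ∈ L0pos P ∧ ∫⁻ ω, ENNReal.ofReal (X ω) ∂P = 1} ∧
    ∃ X : ℕ → Ω → ℝ,
      (∀ n, X n ∈ L0pos P ∧ ∫⁻ ω, ENNReal.ofReal (X n ω) ∂P = 1) ∧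
      TendstoInMeasure P X atTop (fun _ => (0 : ℝ)) ∧
      0 < Filter.liminf (fun n => ∫⁻ ω, ENNReal.ofReal (X n ω) ∂Q) atTop :=
  stmt_17_general P hatomless Q hQ hQP
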